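/- Let U be a self-adjoint unitary operator on H which commutes with X_B and satisfies U·X_B = (X_B²)^{1/2}, the positive semidefinite square root of X_B². Then for every vector ψ ∈ H, ‖(U − X_B)ψ‖ ≤ (cos²(φ)/sin²(φ))·‖(1 − Z_B²)ψ‖. -/

import Mathlib

/-!
Write `A = U X_B`. Since `U² = 1`, `U − X_B = U (1 − A)`, and a self-adjoint involution is an
isometry, so the left side is `‖(1 − A)ψ‖`. With `v = (A − 1)ψ` we have `(A² − 1)ψ = v + A v`,
and `‖v + A v‖² = ‖v‖² + 2 Re ⟪v, A v⟫ + ‖A v‖² ≥ ‖v‖²` by positivity of `A`. Finally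
`A² = X_B²`, and `B₀² = B₁² = 1` together with `sin² φ + cos² φ = 1` give
`X_B² − 1 = (cos² φ / sin² φ)(1 − Z_B²)`.
-/

/-- The operator `Z_B = (B₀ + B₁)/(2 cos φ)`. -/
noncomputable def ZB {H : Type*} [AddCommGroup H] [Module ℂ H]
    (B₀ B₁ : H →ₗ[ℂ] H) (φ : ℝ) : H →ₗ[ℂ] H :=
  (((2 * Real.cos φ : ℝ) : ℂ))⁻¹ • (B₀ + B₁)

/-- The operator `X_B = (B₀ − B₁)/(2 sin φ)`. -/
noncomputable def XB {H : Type*} [AddCommGroup H] [Module ℂ H]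
    (B₀ B₁ : H →ₗ[ℂ] H) (φ : ℝ) : H →ₗ[ℂ] H :=
  (((2 * Real.sin φ : ℝ) : ℂ))⁻¹ • (B₀ - B₁)

open RCLike

section InnerProduct

variable {𝕜 E : Type*} [RCLike 𝕜] [NormedAddCommGroup E] [InnerProductSpace 𝕜 E]

theorem norm_le_norm_add_of_re_inner_nonneg {v w : E} (h : 0 ≤ re (inner 𝕜 v w)) :
    ‖v‖ ≤ ‖v + w‖ := by
  have hsq : ‖v‖ ^ 2 ≤ ‖v + w‖ ^ 2 := by
    rw [@norm_add_sq 𝕜]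
    nlinarith [sq_nonneg ‖w‖]
  exact (pow_le_pow_iff_left₀ (norm_nonneg _) (norm_nonneg _) two_ne_zero).mp hsq

theorem LinearMap.norm_one_sub_apply_le_of_re_inner_nonneg {A : E →ₗ[𝕜] E}
    (hA : ∀ v, 0 ≤ re (inner 𝕜 v (A v))) (ψ : E) :
    ‖(1 - A) ψ‖ ≤ ‖(A * A - 1) ψ‖ := by
  set v := (A - 1) ψ
  have hv : (A * A - 1) ψ = v + A v := by
    simp only [v, LinearMap.sub_apply, Module.End.mul_apply, Module.End.one_apply, map_sub]
    abel
  calc ‖(1 - A) ψ‖ = ‖v‖ := by rw [← norm_neg, ← LinearMap.neg_apply, neg_sub]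
    _ ≤ ‖v + A v‖ := norm_le_norm_add_of_re_inner_nonneg (hA v)
    _ = ‖(A * A - 1) ψ‖ := by rw [hv]

theorem LinearMap.IsSymmetric.norm_apply_of_mul_self_eq_one {U : E →ₗ[𝕜] E}
    (hU : U.IsSymmetric) (hUU : U * U = 1) (v : E) : ‖U v‖ = ‖v‖ := by
  have hsq : ‖U v‖ ^ 2 = ‖v‖ ^ 2 := by
    rw [← @inner_self_eq_norm_sq 𝕜, ← @inner_self_eq_norm_sq 𝕜, hU, ← Module.End.mul_apply,
      hUU, Module.End.one_apply]
  exact (pow_left_inj₀ (norm_nonneg _) (norm_nonneg _) two_ne_zero).mp hsq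

end InnerProduct

theorem XB_mul_XB_sub_one {H : Type*} [AddCommGroup H] [Module ℂ H]
    (B₀ B₁ : H →ₗ[ℂ] H) (hB₀sq : B₀ * B₀ = 1) (hB₁sq : B₁ * B₁ = 1)
    (φ : ℝ) (hc : Real.cos φ ≠ 0) (hs : Real.sin φ ≠ 0) :
    XB B₀ B₁ φ * XB B₀ B₁ φ - 1
      = ((Real.cos φ ^ 2 / Real.sin φ ^ 2 : ℝ) : ℂ) • (1 - ZB B₀ B₁ φ * ZB B₀ B₁ φ) := by
  have hsq_sub : (B₀ - B₁) * (B₀ - B₁) = (2 : ℂ) • (1 : H →ₗ[ℂ] H) - (B₀ * B₁ + B₁ * B₀) := by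
    simp only [sub_mul, mul_sub, hB₀sq, hB₁sq]
    module
  have hsq_add : (B₀ + B₁) * (B₀ + B₁) = (2 : ℂ) • (1 : H →ₗ[ℂ] H) + (B₀ * B₁ + B₁ * B₀) := by
    simp only [add_mul, mul_add, hB₀sq, hB₁sq]
    module
  have hc' : Complex.cos φ ≠ 0 := by exact_mod_cast hc
  have hs' : Complex.sin φ ≠ 0 := by exact_mod_cast hs
  unfold XB ZB
  rw [smul_mul_smul_comm, smul_mul_smul_comm, hsq_sub, hsq_add]
  match_scalars
  · field_simp
    linear_combination (-2) * Complex.sin_sq_add_cos_sq (φ : ℂ)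
  all_goals field_simp

theorem regularized_XB_close_general {H : Type*} [NormedAddCommGroup H] [InnerProductSpace ℂ H]
    (B₀ B₁ : H →ₗ[ℂ] H)
    (hB₀sq : B₀ * B₀ = 1) (hB₁sq : B₁ * B₁ = 1)
    (φ : ℝ) (hc : Real.cos φ ≠ 0) (hs : Real.sin φ ≠ 0)
    (U : H →ₗ[ℂ] H) (hU : U.IsSymmetric) (hUU : U * U = 1)
    (hpos : ∀ ψ : H, 0 ≤ (inner ℂ ψ ((U * XB B₀ B₁ φ) ψ) : ℂ).re)
    (hsqrt : (U * XB B₀ B₁ φ) * (U * XB B₀ B₁ φ) = XB B₀ B₁ φ * XB B₀ B₁ φ)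
    (ψ : H) :
    ‖(U - XB B₀ B₁ φ) ψ‖
      ≤ (Real.cos φ ^ 2 / Real.sin φ ^ 2) *
          ‖((1 : H →ₗ[ℂ] H) - ZB B₀ B₁ φ * ZB B₀ B₁ φ) ψ‖ := by
  set A := U * XB B₀ B₁ φ
  have hfactor : U - XB B₀ B₁ φ = U * (1 - A) := by
    rw [mul_sub, mul_one, ← mul_assoc, hUU, one_mul]
  have hratio : (0 : ℝ) ≤ Real.cos φ ^ 2 / Real.sin φ ^ 2 := by positivity
  calc ‖(U - XB B₀ B₁ φ) ψ‖ = ‖(1 - A) ψ‖ := by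
        rw [hfactor, Module.End.mul_apply, hU.norm_apply_of_mul_self_eq_one hUU]
    _ ≤ ‖(A * A - 1) ψ‖ := LinearMap.norm_one_sub_apply_le_of_re_inner_nonneg hpos ψ
    _ = _ := by
        rw [hsqrt, XB_mul_XB_sub_one B₀ B₁ hB₀sq hB₁sq φ hc hs, LinearMap.smul_apply,
          norm_smul, Complex.norm_real, Real.norm_of_nonneg hratio]

/-- Let `U` be a self-adjoint unitary operator on `H` commuting with `X_B`
and such that `U·X_B` is the positive semidefinite square root of `X_B²` (i.e. `U·X_B` is
symmetric, positive, and `(U·X_B)² = X_B²`). Then for every `ψ ∈ H`,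
`‖(U − X_B)ψ‖ ≤ (cos²(φ)/sin²(φ))·‖(1 − Z_B²)ψ‖`. -/
theorem regularized_XB_close {H : Type*} [NormedAddCommGroup H] [InnerProductSpace ℂ H]
    [FiniteDimensional ℂ H]
    (B₀ B₁ : H →ₗ[ℂ] H) (hB₀ : B₀.IsSymmetric) (hB₁ : B₁.IsSymmetric)
    (hB₀sq : B₀ * B₀ = 1) (hB₁sq : B₁ * B₁ = 1)
    (φ : ℝ) (hc : Real.cos φ ≠ 0) (hs : Real.sin φ ≠ 0)
    (U : H →ₗ[ℂ] H) (hU : U.IsSymmetric) (hUU : U * U = 1)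
    (hcomm : U * XB B₀ B₁ φ = XB B₀ B₁ φ * U)
    (hsym : (U * XB B₀ B₁ φ).IsSymmetric)
    (hpos : ∀ ψ : H, 0 ≤ (inner ℂ ψ ((U * XB B₀ B₁ φ) ψ) : ℂ).re)
    (hsqrt : (U * XB B₀ B₁ φ) * (U * XB B₀ B₁ φ) = XB B₀ B₁ φ * XB B₀ B₁ φ)
    (ψ : H) :
    ‖(U - XB B₀ B₁ φ) ψ‖
      ≤ (Real.cos φ ^ 2 / Real.sin φ ^ 2) *
          ‖((1 : H →ₗ[ℂ] H) - ZB B₀ B₁ φ * ZB B₀ B₁ φ) ψ‖ :=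
  regularized_XB_close_general B₀ B₁ hB₀sq hB₁sq φ hc hs U hU hUU hpos hsqrt ψ
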